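/- arXiv:1208.0935 — 3 statements merged into one kernel-verified Lean document; each statement's English description precedes it below -/
import Mathlib

section
/- Let b > m ≥ 0, c > 0, q = (b-m)/c, and let u_t = δ q/(δ + (q-δ)e^{-qct}) with 0 < δ < q. Suppose ρ: [0,∞) → ℝ is differentiable, satisfies ρ(0) ≥ δ, and ρ'(t) ≥ (b-m)ρ(t) - cρ(t)² whenever 0 < ρ(t) < q, with 0 < ρ(t) < q for all t. Then ρ(t) ≥ u_t for all t ≥ 0, and consequently ρ(t) → q as t → +∞. -/
/-!
In the log-odds coordinate `L(x) = log x - log (q - x)` the logistic equation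
`x' = c x (q - x)` becomes `L' = c q`, and its solution starting at `δ` is exactly
`L(u t) = L(δ) + c q t`. The differential inequality gives `L(ρ t)' ≥ c q`, so
`L(ρ t) - c q t` is nondecreasing; since `L` is increasing on `(0, q)` this yields
`ρ ≥ u`, and `ρ → q` follows by squeezing between `u → q` and the bound `ρ < q`.
-/

open Filter Real Set Topology

noncomputable def logOdds (q x : ℝ) : ℝ := log x - log (q - x)

lemma logOdds_strictMonoOn (q : ℝ) : StrictMonoOn (logOdds q) (Ioo 0 q) := by
  intro x hx y hy hxy
  have hlog : log x < log y := log_lt_log hx.1 hxy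
  have hlog_sub : log (q - y) < log (q - x) := log_lt_log (sub_pos.2 hy.2) (by linarith)
  unfold logOdds
  linarith

section Logistic

variable {q δ : ℝ}

lemma logistic_mem_Ioo (hδ : 0 < δ) (hδq : δ < q) (x : ℝ) :
    δ * q / (δ + (q - δ) * exp x) ∈ Ioo 0 q := by
  have hq : 0 < q := hδ.trans hδq
  have hD : δ < δ + (q - δ) * exp x := by
    have := mul_pos (sub_pos.2 hδq) (exp_pos x)
    linarith
  refine ⟨by positivity, ?_⟩
  rw [div_lt_iff₀ (by linarith), mul_comm]
  exact mul_lt_mul_of_pos_left hD hq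

lemma logOdds_logistic (hδ : 0 < δ) (hδq : δ < q) (x : ℝ) :
    logOdds q (δ * q / (δ + (q - δ) * exp x)) = logOdds q δ - x := by
  have hq : 0 < q := hδ.trans hδq
  have hqδ : 0 < q - δ := sub_pos.2 hδq
  have hD : 0 < δ + (q - δ) * exp x := by positivity
  have hcompl :
      q - δ * q / (δ + (q - δ) * exp x) = (q - δ) * exp x * q / (δ + (q - δ) * exp x) := by
    field_simp
    ring
  unfold logOdds
  rw [hcompl, log_div (by positivity) hD.ne', log_div (by positivity) hD.ne',
    log_mul hδ.ne' hq.ne', log_mul (by positivity) hq.ne', log_mul hqδ.ne' (exp_pos x).ne',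
    log_exp]
  ring

lemma tendsto_logistic {k : ℝ} (hk : k < 0) (hδ : δ ≠ 0) :
    Tendsto (fun t ↦ δ * q / (δ + (q - δ) * exp (k * t))) atTop (𝓝 q) := by
  have hexp : Tendsto (fun t ↦ exp (k * t)) atTop (𝓝 0) :=
    tendsto_exp_atBot.comp (tendsto_id.const_mul_atTop_of_neg hk)
  have hden :=
    (tendsto_const_nhds (x := δ)).add ((tendsto_const_nhds (x := q - δ)).mul hexp)
  have hlim := (tendsto_const_nhds (x := δ * q)).div hden (by simpa using hδ)
  rwa [mul_zero, add_zero, mul_div_cancel_left₀ q hδ] at hlim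

end Logistic

lemma HasDerivAt.logOdds {ρ : ℝ → ℝ} {ρ' q t : ℝ} (h : HasDerivAt ρ ρ' t)
    (hpos : 0 < ρ t) (hlt : ρ t < q) :
    HasDerivAt (fun s ↦ logOdds q (ρ s)) (q * ρ' / (ρ t * (q - ρ t))) t := by
  have hsub : 0 < q - ρ t := sub_pos.2 hlt
  refine ((h.log hpos.ne').sub ((h.const_sub q).log hsub.ne')).congr_deriv ?_
  field_simp
  ring

section Comparison

variable {ρ : ℝ → ℝ} {a c q : ℝ}

lemma monotoneOn_logOdds_sub_of_logistic_le_deriv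
    (hdiff : ∀ t, a ≤ t → DifferentiableAt ℝ ρ t)
    (hbounds : ∀ t, a ≤ t → 0 < ρ t ∧ ρ t < q)
    (hineq : ∀ t, a ≤ t → c * ρ t * (q - ρ t) ≤ deriv ρ t) :
    MonotoneOn (fun t ↦ logOdds q (ρ t) - c * q * t) (Ici a) := by
  have hderiv : ∀ t, a ≤ t → HasDerivAt (fun t ↦ logOdds q (ρ t) - c * q * t)
      (q * deriv ρ t / (ρ t * (q - ρ t)) - c * q) t := fun t ht ↦
    ((hdiff t ht).hasDerivAt.logOdds (hbounds t ht).1 (hbounds t ht).2).sub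
      ((hasDerivAt_id t).const_mul (c * q) |>.congr_deriv (mul_one _))
  refine monotoneOn_of_hasDerivWithinAt_nonneg (convex_Ici a)
    (fun t ht ↦ (hderiv t ht).continuousAt.continuousWithinAt)
    (fun t ht ↦ (hderiv t (interior_subset ht)).hasDerivWithinAt) fun t ht ↦ ?_
  obtain ⟨hpos, hlt⟩ := hbounds t (interior_subset ht)
  have hq : 0 < q := hpos.trans hlt
  have hρq : 0 < ρ t * (q - ρ t) := mul_pos hpos (sub_pos.2 hlt)
  rw [sub_nonneg, le_div_iff₀ hρq]
  linarith [mul_le_mul_of_nonneg_left (hineq t (interior_subset ht)) hq.le]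

theorem logistic_le_of_logistic_le_deriv {δ : ℝ} (hδ : 0 < δ) (hinit : δ ≤ ρ 0)
    (hdiff : ∀ t, 0 ≤ t → DifferentiableAt ℝ ρ t)
    (hbounds : ∀ t, 0 ≤ t → 0 < ρ t ∧ ρ t < q)
    (hineq : ∀ t, 0 ≤ t → c * ρ t * (q - ρ t) ≤ deriv ρ t) {t : ℝ} (ht : 0 ≤ t) :
    δ * q / (δ + (q - δ) * exp (-q * c * t)) ≤ ρ t := by
  have hδq : δ < q := hinit.trans_lt (hbounds 0 le_rfl).2
  have hmono := monotoneOn_logOdds_sub_of_logistic_le_deriv hdiff hbounds hineq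
    (mem_Ici.2 le_rfl) (mem_Ici.2 ht) ht
  have hstart : logOdds q δ ≤ logOdds q (ρ 0) :=
    (logOdds_strictMonoOn q).monotoneOn ⟨hδ, hδq⟩ (hbounds 0 le_rfl) hinit
  rw [← (logOdds_strictMonoOn q).le_iff_le (logistic_mem_Ioo hδ hδq _) (hbounds t ht),
    logOdds_logistic hδ hδq]
  simp only [mul_zero, sub_zero] at hmono
  linarith

end Comparison

theorem stmt_11_general (b m c q δ : ℝ) (hc : 0 < c)
    (hq : q = (b - m) / c) (hδ : 0 < δ) (hδq : δ < q)
    (u : ℝ → ℝ)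
    (hu : ∀ t : ℝ, u t = δ * q / (δ + (q - δ) * Real.exp (-q * c * t)))
    (ρ : ℝ → ℝ)
    (hdiff : ∀ t : ℝ, 0 ≤ t → DifferentiableAt ℝ ρ t)
    (hbounds : ∀ t : ℝ, 0 ≤ t → 0 < ρ t ∧ ρ t < q)
    (hineq : ∀ t : ℝ, 0 ≤ t → deriv ρ t ≥ (b - m) * ρ t - c * (ρ t) ^ 2)
    (hinit : ρ 0 ≥ δ) :
    (∀ t : ℝ, 0 ≤ t → ρ t ≥ u t) ∧
      Filter.Tendsto ρ Filter.atTop (nhds q) := by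
  have hcq : b - m = c * q := by rw [hq]; field_simp
  have hlogistic : ∀ t, 0 ≤ t → c * ρ t * (q - ρ t) ≤ deriv ρ t := fun t ht ↦ by
    linear_combination hineq t ht - ρ t * hcq
  have hcomp : ∀ t : ℝ, 0 ≤ t → ρ t ≥ u t := fun t ht ↦
    (hu t).symm ▸ logistic_le_of_logistic_le_deriv hδ hinit hdiff hbounds hlogistic ht
  have hu_lim : Tendsto u atTop (𝓝 q) := by
    simp only [funext hu]
    exact tendsto_logistic (mul_neg_of_neg_of_pos (neg_neg_of_pos (hδ.trans hδq)) hc) hδ.ne'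
  refine ⟨hcomp, tendsto_of_tendsto_of_tendsto_of_le_of_le' hu_lim tendsto_const_nhds ?_ ?_⟩
  · filter_upwards [eventually_ge_atTop 0] with t ht using hcomp t ht
  · filter_upwards [eventually_ge_atTop 0] with t ht using (hbounds t ht).2.le

/-- Comparison principle: a solution of the logistic differential inequality
staying in `(0, q)` and starting above `δ` dominates the explicit logistic
solution `u` starting at `δ`, hence converges to the carrying capacity `q`. -/
theorem stmt_11 (b m c q δ : ℝ) (hm : 0 ≤ m) (hbm : m < b) (hc : 0 < c)
    (hq : q = (b - m) / c) (hδ : 0 < δ) (hδq : δ < q)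
    (u : ℝ → ℝ)
    (hu : ∀ t : ℝ, u t = δ * q / (δ + (q - δ) * Real.exp (-q * c * t)))
    (ρ : ℝ → ℝ)
    (hdiff : ∀ t : ℝ, 0 ≤ t → DifferentiableAt ℝ ρ t)
    (hbounds : ∀ t : ℝ, 0 ≤ t → 0 < ρ t ∧ ρ t < q)
    (hineq : ∀ t : ℝ, 0 ≤ t → deriv ρ t ≥ (b - m) * ρ t - c * (ρ t) ^ 2)
    (hinit : ρ 0 ≥ δ) :
    (∀ t : ℝ, 0 ≤ t → ρ t ≥ u t) ∧
      Filter.Tendsto ρ Filter.atTop (nhds q) :=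
  stmt_11_general b m c q δ hc hq hδ hδq u hu ρ hdiff hbounds hineq hinit
end

section
/- Let a₊, a₋ ∈ L¹(ℝ^d) be nonnegative, m ≥ 0, and let ρ_t be a classical solution in C_b(ℝ^d) on [0,T) of ∂_t ρ_t(x) = -m ρ_t(x) - ρ_t(x)∫a₋(x-y)ρ_t(y)dy + ∫a₊(x-y)ρ_t(y)dy with ρ_0 ≥ 0. Then ρ_t(x) ≥ 0 for all t ∈ [0,T) and x ∈ ℝ^d, i.e., the kinetic equation preserves positivity. -/
/-!
Let `N t = ‖(ρ t)⁻‖` be the sup norm of the negative part of the solution. The right-hand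
side `F` of the equation is Lipschitz on bounded subsets of `C_b`, so by continuity of `ρ`
and the mean value theorem `ρ (t + h) = ρ t + h F (ρ t) + o(h)` uniformly in `x`.
In `ρ t + h F (ρ t)` the loss terms multiply `ρ t x` by the factor `1 - h (m + (a₋ ⋆ ρ t) x)`,
nonnegative for small `h`, while the gain term `(a₊ ⋆ ρ t) x` is at least `-‖a₊‖₁ N t`.
Hence the right Dini derivative of `N` is at most `K N` with `K = ‖a₋‖₁ sup ‖ρ‖ + ‖a₊‖₁`,
and Grönwall's inequality with `N 0 = 0` gives `N ≡ 0`.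
-/

open MeasureTheory Filter Topology Set BoundedContinuousFunction

lemma abs_sub_sub_mul_le_of_hasDerivAt {f f' : ℝ → ℝ} {s z ε : ℝ} (hsz : s ≤ z)
    (hf : ∀ τ ∈ Icc s z, HasDerivAt f (f' τ) τ) (hf' : ∀ τ ∈ Icc s z, |f' τ - f' s| ≤ ε) :
    |f z - f s - (z - s) * f' s| ≤ (z - s) * ε := by
  have hderiv : ∀ τ ∈ Icc s z,
      HasDerivWithinAt (fun u => f u - u * f' s) (f' τ - f' s) (Icc s z) τ := fun τ hτ =>
    ((hf τ hτ).sub (hasDerivAt_mul_const (f' s))).hasDerivWithinAt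
  have hmv := (convex_Icc s z).norm_image_sub_le_of_norm_hasDerivWithin_le hderiv hf'
    (left_mem_Icc.mpr hsz) (right_mem_Icc.mpr hsz)
  rw [Real.norm_eq_abs, Real.norm_eq_abs, abs_of_nonneg (sub_nonneg.mpr hsz)] at hmv
  calc |f z - f s - (z - s) * f' s| = |f z - z * f' s - (f s - s * f' s)| := by ring_nf
    _ ≤ (z - s) * ε := by linarith

lemma eventually_abs_sub_sub_mul_le_of_hasDerivAt {X : Type*} {u G : ℝ → X → ℝ} {s ε : ℝ}
    (hu : ∀ᶠ τ in 𝓝[≥] s, ∀ x, HasDerivAt (u · x) (G τ x) τ)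
    (hG : ∀ᶠ τ in 𝓝[≥] s, ∀ x, |G τ x - G s x| ≤ ε) :
    ∀ᶠ z in 𝓝[>] s, ∀ x, |u z x - u s x - (z - s) * G s x| ≤ (z - s) * ε := by
  obtain ⟨c, hsc, hc⟩ := mem_nhdsGE_iff_exists_Ico_subset.mp (hu.and hG)
  filter_upwards [Ioo_mem_nhdsGT hsc] with z hz x
  have hsub : Icc s z ⊆ Ico s c := Icc_subset_Ico_right hz.2
  exact abs_sub_sub_mul_le_of_hasDerivAt hz.1.le (fun τ hτ => (hc (hsub hτ)).1 x)
    (fun τ hτ => (hc (hsub hτ)).2 x)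

namespace BoundedContinuousFunction

variable {α : Type*} [TopologicalSpace α]

lemma neg_norm_negPart_le (f : α →ᵇ ℝ) (x : α) : -‖f⁻‖ ≤ f x := by
  have h : |f⁻ x| ≤ ‖f⁻‖ := by simpa only [Real.norm_eq_abs] using f⁻.norm_coe_le_norm x
  have h' : -(f x) ≤ f⁻ x := by
    simpa only [coe_negPart, Pi.negPart_apply] using neg_le_negPart (f x)
  linarith [le_abs_self (f⁻ x)]

lemma norm_negPart_le_of_forall_neg_le {f : α →ᵇ ℝ} {B : ℝ} (hB : 0 ≤ B)
    (h : ∀ x, -B ≤ f x) : ‖f⁻‖ ≤ B := by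
  refine (norm_le hB).mpr fun x => ?_
  rw [coe_negPart, Pi.negPart_apply, Real.norm_eq_abs, abs_of_nonneg (negPart_nonneg _),
    negPart_def]
  exact sup_le (by linarith [h x]) hB

end BoundedContinuousFunction

namespace KineticEquation

noncomputable def conv {G : Type*} [Sub G] [MeasurableSpace G] (μ : Measure G) (a g : G → ℝ)
    (x : G) : ℝ :=
  ∫ y, a (x - y) * g y ∂μ

noncomputable def rhs {G : Type*} [Sub G] [MeasurableSpace G] (μ : Measure G) (m : ℝ)
    (aplus aminus g : G → ℝ) (x : G) : ℝ :=
  -m * g x - g x * conv μ aminus g x + conv μ aplus g x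

variable {G : Type*} [TopologicalSpace G] [AddGroup G] [MeasurableSpace G]
  [OpensMeasurableSpace G] [MeasurableAdd G] [MeasurableNeg G]
  {μ : Measure G} [μ.IsAddLeftInvariant] [μ.IsNegInvariant] {a : G → ℝ}

lemma integrable_conv_integrand (ha : Integrable a μ) (g : G →ᵇ ℝ) (x : G) :
    Integrable (fun y => a (x - y) * g y) μ :=
  (ha.comp_sub_left x).mul_bdd g.continuous.aestronglyMeasurable
    (ae_of_all _ g.norm_coe_le_norm)

lemma conv_sub (ha : Integrable a μ) (g h : G →ᵇ ℝ) (x : G) :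
    conv μ a g x - conv μ a h x = conv μ a ⇑(g - h) x := by
  rw [conv, conv, ← integral_sub (integrable_conv_integrand ha g x)
    (integrable_conv_integrand ha h x)]
  simp only [conv, BoundedContinuousFunction.coe_sub, Pi.sub_apply, mul_sub]

lemma abs_conv_le (ha : Integrable a μ) (ha₀ : ∀ x, 0 ≤ a x) (g : G →ᵇ ℝ) (x : G) :
    |conv μ a g x| ≤ (∫ y, a y ∂μ) * ‖g‖ :=
  calc |conv μ a g x| ≤ ∫ y, |a (x - y) * g y| ∂μ := abs_integral_le_integral_abs
    _ ≤ ∫ y, a (x - y) * ‖g‖ ∂μ := by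
        refine integral_mono (integrable_conv_integrand ha g x).abs
          ((ha.comp_sub_left x).mul_const _) fun y => ?_
        rw [abs_mul, abs_of_nonneg (ha₀ _)]
        exact mul_le_mul_of_nonneg_left (by simpa using g.norm_coe_le_norm y) (ha₀ _)
    _ = (∫ y, a y ∂μ) * ‖g‖ := by rw [integral_mul_const, integral_sub_left_eq_self a μ x]

lemma integral_mul_le_conv (ha : Integrable a μ) (ha₀ : ∀ x, 0 ≤ a x) (g : G →ᵇ ℝ) {c : ℝ}
    (hc : ∀ y, c ≤ g y) (x : G) : (∫ y, a y ∂μ) * c ≤ conv μ a g x :=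
  calc (∫ y, a y ∂μ) * c = ∫ y, a (x - y) * c ∂μ := by
        rw [integral_mul_const, integral_sub_left_eq_self a μ x]
    _ ≤ conv μ a g x := integral_mono ((ha.comp_sub_left x).mul_const c)
        (integrable_conv_integrand ha g x) fun y => mul_le_mul_of_nonneg_left (hc y) (ha₀ _)

variable {m : ℝ} {aplus aminus : G → ℝ}

lemma abs_rhs_sub_le (hm : 0 ≤ m) (hplus : Integrable aplus μ)
    (hplus₀ : ∀ x, 0 ≤ aplus x) (hminus : Integrable aminus μ) (hminus₀ : ∀ x, 0 ≤ aminus x)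
    (f g : G →ᵇ ℝ) (x : G) :
    |rhs μ m aplus aminus f x - rhs μ m aplus aminus g x|
      ≤ (m + (∫ y, aminus y ∂μ) * (‖f‖ + ‖g‖) + ∫ y, aplus y ∂μ) * ‖f - g‖ := by
  set Aminus := ∫ y, aminus y ∂μ
  have hδ : |f x - g x| ≤ ‖f - g‖ := by simpa using (f - g).norm_coe_le_norm x
  have hg : |g x| ≤ ‖g‖ := by simpa using g.norm_coe_le_norm x
  have t₀ : |-m * (f x - g x)| ≤ m * ‖f - g‖ := by
    rw [abs_mul, abs_neg, abs_of_nonneg hm]; exact mul_le_mul_of_nonneg_left hδ hm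
  have t₁ : |(f x - g x) * conv μ aminus f x| ≤ ‖f - g‖ * (Aminus * ‖f‖) := by
    rw [abs_mul]
    exact mul_le_mul hδ (abs_conv_le hminus hminus₀ f x) (abs_nonneg _) (norm_nonneg _)
  have t₂ : |g x * (conv μ aminus f x - conv μ aminus g x)| ≤ ‖g‖ * (Aminus * ‖f - g‖) := by
    rw [abs_mul, conv_sub hminus]
    exact mul_le_mul hg (abs_conv_le hminus hminus₀ _ x) (abs_nonneg _) (norm_nonneg _)
  have t₃ : |conv μ aplus f x - conv μ aplus g x| ≤ (∫ y, aplus y ∂μ) * ‖f - g‖ := by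
    rw [conv_sub hplus]; exact abs_conv_le hplus hplus₀ _ x
  have hsplit : rhs μ m aplus aminus f x - rhs μ m aplus aminus g x
      = -m * (f x - g x) - ((f x - g x) * conv μ aminus f x
          + g x * (conv μ aminus f x - conv μ aminus g x))
        + (conv μ aplus f x - conv μ aplus g x) := by
    simp only [rhs]; ring
  rw [hsplit, abs_le]
  obtain ⟨l₀, u₀⟩ := abs_le.mp t₀
  obtain ⟨l₁, u₁⟩ := abs_le.mp t₁
  obtain ⟨l₂, u₂⟩ := abs_le.mp t₂
  obtain ⟨l₃, u₃⟩ := abs_le.mp t₃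
  constructor <;> linarith

lemma neg_add_mul_rhs_le (hm : 0 ≤ m) (hplus : Integrable aplus μ)
    (hplus₀ : ∀ x, 0 ≤ aplus x) (hminus : Integrable aminus μ) (hminus₀ : ∀ x, 0 ≤ aminus x)
    (f : G →ᵇ ℝ) {h : ℝ} (hh₀ : 0 ≤ h) (hh : h * (m + (∫ y, aminus y ∂μ) * ‖f‖) ≤ 1) (x : G) :
    -(f x + h * rhs μ m aplus aminus f x)
      ≤ ‖f⁻‖ * (1 + h * ((∫ y, aminus y ∂μ) * ‖f‖ + ∫ y, aplus y ∂μ)) := by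
  set Aminus := ∫ y, aminus y ∂μ
  set Aplus := ∫ y, aplus y ∂μ
  set c := conv μ aminus f x
  have hc := abs_le.mp (abs_conv_le hminus hminus₀ f x)
  have hgain : -(Aplus * ‖f⁻‖) ≤ conv μ aplus f x := by
    simpa using integral_mul_le_conv hplus hplus₀ f f.neg_norm_negPart_le x
  have hf := f.neg_norm_negPart_le x
  have hfactor₀ : 0 ≤ 1 - h * (m + c) := by nlinarith
  have hloss : -f x * (1 - h * (m + c)) ≤ ‖f⁻‖ * (1 + h * (Aminus * ‖f‖)) := by
    calc -f x * (1 - h * (m + c)) ≤ ‖f⁻‖ * (1 - h * (m + c)) :=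
          mul_le_mul_of_nonneg_right (by linarith) hfactor₀
      _ ≤ ‖f⁻‖ * (1 + h * (Aminus * ‖f‖)) :=
          mul_le_mul_of_nonneg_left (by nlinarith) (norm_nonneg _)
  have hsplit : -(f x + h * rhs μ m aplus aminus f x)
      = -f x * (1 - h * (m + c)) - h * conv μ aplus f x := by
    simp only [rhs, c]; ring
  rw [hsplit]
  linarith [mul_le_mul_of_nonneg_left hgain hh₀]

lemma eventually_slope_norm_negPart_lt (hm : 0 ≤ m) (hplus : Integrable aplus μ)
    (hplus₀ : ∀ x, 0 ≤ aplus x) (hminus : Integrable aminus μ) (hminus₀ : ∀ x, 0 ≤ aminus x)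
    {ρ : ℝ → G →ᵇ ℝ} {s : ℝ} (hρ : ContinuousWithinAt ρ (Ici s) s)
    (hode : ∀ᶠ τ in 𝓝[≥] s, ∀ x, HasDerivAt (ρ · x) (rhs μ m aplus aminus (ρ τ) x) τ)
    {r : ℝ} (hr : ((∫ y, aminus y ∂μ) * ‖ρ s‖ + ∫ y, aplus y ∂μ) * ‖(ρ s)⁻‖ < r) :
    ∀ᶠ z in 𝓝[>] s, (z - s)⁻¹ * (‖(ρ z)⁻‖ - ‖(ρ s)⁻‖) < r := by
  set Aminus := ∫ y, aminus y ∂μ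
  set K := Aminus * ‖ρ s‖ + ∫ y, aplus y ∂μ
  set ε := (r - K * ‖(ρ s)⁻‖) / 2
  have hε : 0 < ε := by simp only [ε]; linarith
  have hK : 0 ≤ K := add_nonneg (mul_nonneg (integral_nonneg hminus₀) (norm_nonneg _))
    (integral_nonneg hplus₀)
  have hRHS : ∀ᶠ τ in 𝓝[≥] s, ∀ x,
      |rhs μ m aplus aminus (ρ τ) x - rhs μ m aplus aminus (ρ s) x| ≤ ε := by
    have hlip : Tendsto (fun τ => (m + Aminus * (‖ρ τ‖ + ‖ρ s‖) + ∫ y, aplus y ∂μ) * ‖ρ τ - ρ s‖)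
        (𝓝[≥] s) (𝓝 0) := by
      have hdist := tendsto_iff_norm_sub_tendsto_zero.mp hρ
      simpa using ((tendsto_const_nhds.add (tendsto_const_nhds.mul
        (hρ.norm.add tendsto_const_nhds))).add tendsto_const_nhds).mul hdist
    filter_upwards [hlip.eventually (ge_mem_nhds hε)] with τ hτ x
    exact (abs_rhs_sub_le hm hplus hplus₀ hminus hminus₀ _ _ x).trans hτ
  have hEuler := eventually_abs_sub_sub_mul_le_of_hasDerivAt hode hRHS
  have hsmall : ∀ᶠ z in 𝓝[>] s, (z - s) * (m + Aminus * ‖ρ s‖) ≤ 1 := by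
    have : Tendsto (fun z => (z - s) * (m + Aminus * ‖ρ s‖)) (𝓝[>] s) (𝓝 0) := by
      have h := ((tendsto_id (x := 𝓝 s)).sub_const s).mul_const (m + Aminus * ‖ρ s‖)
      rw [sub_self, zero_mul] at h
      exact h.mono_left nhdsWithin_le_nhds
    exact this.eventually (ge_mem_nhds one_pos)
  filter_upwards [hEuler, hsmall, self_mem_nhdsWithin] with z hz hzsmall hsz
  have hh : 0 < z - s := sub_pos.mpr hsz
  have hnegPart : ‖(ρ z)⁻‖ ≤ ‖(ρ s)⁻‖ * (1 + (z - s) * K) + (z - s) * ε := by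
    refine norm_negPart_le_of_forall_neg_le (add_nonneg (mul_nonneg (norm_nonneg _)
      (by linarith [mul_nonneg hh.le hK])) (mul_nonneg hh.le hε.le)) fun x => ?_
    have hstep := neg_add_mul_rhs_le hm hplus hplus₀ hminus hminus₀ (ρ s) hh.le hzsmall x
    linarith [(abs_le.mp (hz x)).1]
  rw [inv_mul_lt_iff₀ hh]
  have : (z - s) * (K * ‖(ρ s)⁻‖ + ε) < (z - s) * r := by
    apply mul_lt_mul_of_pos_left _ hh
    simp only [ε]; linarith
  linarith

theorem nonneg_of_hasDerivAt_rhs (hm : 0 ≤ m) (hplus : Integrable aplus μ)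
    (hplus₀ : ∀ x, 0 ≤ aplus x) (hminus : Integrable aminus μ) (hminus₀ : ∀ x, 0 ≤ aminus x)
    {ρ : ℝ → G →ᵇ ℝ} (hρ : Continuous ρ) {T : ℝ}
    (hode : ∀ t ∈ Ico 0 T, ∀ x, HasDerivAt (ρ · x) (rhs μ m aplus aminus (ρ t) x) t)
    (hinit : ∀ x, 0 ≤ ρ 0 x) :
    ∀ t ∈ Ico 0 T, ∀ x, 0 ≤ ρ t x := by
  rintro t ⟨ht₀, htT⟩
  obtain ⟨M, hM⟩ := (isCompact_Icc (a := (0 : ℝ)) (b := t)).exists_bound_of_continuousOn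
    hρ.continuousOn
  set K := (∫ y, aminus y ∂μ) * M + ∫ y, aplus y ∂μ
  have hslope : ∀ s ∈ Ico 0 t, ∀ r, K * ‖(ρ s)⁻‖ < r →
      ∃ᶠ z in 𝓝[>] s, (z - s)⁻¹ * (‖(ρ z)⁻‖ - ‖(ρ s)⁻‖) < r := by
    rintro s ⟨hs₀, hst⟩ r hr
    have hode_s : ∀ᶠ τ in 𝓝[≥] s, ∀ x,
        HasDerivAt (ρ · x) (rhs μ m aplus aminus (ρ τ) x) τ := by
      filter_upwards [Ico_mem_nhdsGE (hst.trans htT)] with τ hτ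
      exact hode τ ⟨hs₀.trans hτ.1, hτ.2⟩
    have hK : ((∫ y, aminus y ∂μ) * ‖ρ s‖ + ∫ y, aplus y ∂μ) * ‖(ρ s)⁻‖ ≤ K * ‖(ρ s)⁻‖ :=
      mul_le_mul_of_nonneg_right (add_le_add_left (mul_le_mul_of_nonneg_left
        (hM s ⟨hs₀, hst.le⟩) (integral_nonneg hminus₀)) _) (norm_nonneg _)
    exact (eventually_slope_norm_negPart_lt hm hplus hplus₀ hminus hminus₀
      hρ.continuousWithinAt hode_s (hK.trans_lt hr)).frequently
  have hN₀ : ‖(ρ 0)⁻‖ ≤ 0 := by rw [negPart_eq_zero.mpr hinit, norm_zero]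
  have hNt : ‖(ρ t)⁻‖ ≤ gronwallBound 0 K 0 (t - 0) :=
    le_gronwallBound_of_liminf_deriv_right_le (continuous_negPart.comp hρ).norm.continuousOn
      hslope hN₀ (fun _ _ => (add_zero _).ge) t ⟨ht₀, le_rfl⟩
  rw [gronwallBound_ε0_δ0] at hNt
  intro x
  linarith [(ρ t).neg_norm_negPart_le x]

end KineticEquation

theorem stmt_13_general (d : ℕ) (m T : ℝ) (hm : 0 ≤ m)
    (aplus aminus : (Fin d → ℝ) → ℝ)
    (hplus_nonneg : ∀ x, 0 ≤ aplus x) (hminus_nonneg : ∀ x, 0 ≤ aminus x)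
    (hplus_int : Integrable aplus) (hminus_int : Integrable aminus)
    (ρ : ℝ → BoundedContinuousFunction (Fin d → ℝ) ℝ)
    (hcont : Continuous ρ)
    (hode : ∀ t ∈ Set.Ico 0 T, ∀ x : Fin d → ℝ,
      HasDerivAt (fun s => ρ s x)
        (-m * ρ t x - ρ t x * (∫ y, aminus (x - y) * ρ t y)
          + ∫ y, aplus (x - y) * ρ t y) t)
    (hinit : ∀ x, 0 ≤ ρ 0 x) :
    ∀ t ∈ Set.Ico 0 T, ∀ x, 0 ≤ ρ t x :=
  KineticEquation.nonneg_of_hasDerivAt_rhs hm hplus_int hplus_nonneg hminus_int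
    hminus_nonneg hcont hode hinit

/-- Positivity preservation for the kinetic equation: a classical solution in
`C_b(ℝ^d)` on `[0, T)` with nonnegative initial datum stays nonnegative. -/
theorem stmt_13 (d : ℕ) (m T : ℝ) (hm : 0 ≤ m) (hT : 0 < T)
    (aplus aminus : (Fin d → ℝ) → ℝ)
    (hplus_nonneg : ∀ x, 0 ≤ aplus x) (hminus_nonneg : ∀ x, 0 ≤ aminus x)
    (hplus_int : Integrable aplus) (hminus_int : Integrable aminus)
    (ρ : ℝ → BoundedContinuousFunction (Fin d → ℝ) ℝ)
    (hcont : Continuous ρ)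
    (hode : ∀ t ∈ Set.Ico 0 T, ∀ x : Fin d → ℝ,
      HasDerivAt (fun s => ρ s x)
        (-m * ρ t x - ρ t x * (∫ y, aminus (x - y) * ρ t y)
          + ∫ y, aplus (x - y) * ρ t y) t)
    (hinit : ∀ x, 0 ≤ ρ 0 x) :
    ∀ t ∈ Set.Ico 0 T, ∀ x, 0 ≤ ρ t x :=
  stmt_13_general d m T hm aplus aminus hplus_nonneg hminus_nonneg hplus_int hminus_int ρ hcont hode
    hinit
end

section
/- Let b > m ≥ 0, c > 0, q = (b - m)/c, and let a₊, a₋ ∈ L¹(ℝ^d) be nonnegative with ∫a₊ = b, ∫a₋ = c, satisfying a₊(x)/b ≥ (1 - m/b)·a₋(x)/c for a.e. x. Suppose ρ_t is a nonnegative classical solution in C_b(ℝ^d) of ∂_tρ = -mρ - ρ(a₋*ρ) + a₊*ρ with ρ_0(x) < q for all x and sup ρ_0 < q. Then ρ_t(x) < q for all t ≥ 0 and x ∈ ℝ^d. -/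
/-!
Condition (35) says `q a₋ ≤ a₊`. As long as `ρ_t ≤ q`, the effective kernel `a₊ - ρ_t(x) a₋` is
therefore nonnegative, and the right-hand side at `x` is at most
`-m ρ_t(x) + q (b - c ρ_t(x)) = b (q - ρ_t(x))`. Comparison with `u' = b (q - u)` then gives
`ρ_T(x) ≤ q - (q - q') e^{-bT} < q` uniformly in `x` at every time `T` up to which `ρ ≤ q`, so the
continuous function `t ↦ ‖ρ_t⁺‖` can never reach `q`.
-/

open MeasureTheory Set

theorem sub_div_mul_le_of_div_ge {x y b c m : ℝ} (hb : 0 < b)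
    (h : x / b ≥ (1 - m / b) * (y / c)) : (b - m) / c * y ≤ x := by
  have key : (b - m) / c * y = b * ((1 - m / b) * (y / c)) := by field_simp
  rw [key, ← mul_div_cancel₀ x hb.ne']
  exact mul_le_mul_of_nonneg_left h hb.le

theorem logistic_rhs_le {G : Type*} [MeasurableSpace G] [AddGroup G] [MeasurableAdd G]
    [MeasurableNeg G] {μ : Measure G} [μ.IsNegInvariant] [μ.IsAddLeftInvariant]
    {aplus aminus f : G → ℝ} {b c m q r C : ℝ}
    (hminus_nonneg : 0 ≤ᵐ[μ] aminus) (hplus_int : Integrable aplus μ)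
    (hminus_int : Integrable aminus μ) (hb : ∫ z, aplus z ∂μ = b) (hc : ∫ z, aminus z ∂μ = c)
    (hqc : q * c = b - m) (hker : ∀ᵐ z ∂μ, q * aminus z ≤ aplus z)
    (hf : AEStronglyMeasurable f μ) (hfC : ∀ᵐ y ∂μ, ‖f y‖ ≤ C) (hfq : ∀ᵐ y ∂μ, f y ≤ q)
    (hrq : r ≤ q) (x : G) :
    -m * r - r * (∫ y, aminus (x - y) * f y ∂μ) + ∫ y, aplus (x - y) * f y ∂μ ≤ b * (q - r) := by
  have hplus := hplus_int.comp_sub_left x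
  have hminus := hminus_int.comp_sub_left x
  set g : G → ℝ := fun y => aplus (x - y) - r * aminus (x - y)
  have hg : Integrable g μ := hplus.sub (hminus.const_mul r)
  have hg_nonneg : ∀ᵐ y ∂μ, 0 ≤ g y := by
    have : ∀ᵐ z ∂μ, r * aminus z ≤ aplus z := by
      filter_upwards [hker, hminus_nonneg] with z hz hz0
      exact (mul_le_mul_of_nonneg_right hrq hz0).trans hz
    filter_upwards [(Measure.measurePreserving_sub_left μ x).quasiMeasurePreserving.ae this]
      with y hy
    exact sub_nonneg.2 hy
  have hgf : (∫ y, aplus (x - y) * f y ∂μ) - r * ∫ y, aminus (x - y) * f y ∂μ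
      = ∫ y, g y * f y ∂μ := by
    rw [← integral_const_mul, ← integral_sub (hplus.mul_bdd hf hfC)
      ((hminus.mul_bdd hf hfC).const_mul r)]
    congr 1 with y
    ring
  have hg_int : ∫ y, g y ∂μ = b - r * c := by
    rw [integral_sub hplus (hminus.const_mul r), integral_const_mul,
      integral_sub_left_eq_self aplus μ x, integral_sub_left_eq_self aminus μ x, hb, hc]
  have hmono : ∫ y, g y * f y ∂μ ≤ ∫ y, g y * q ∂μ :=
    integral_mono_ae (hg.mul_bdd hf hfC) (hg.mul_const q) <| by
      filter_upwards [hg_nonneg, hfq] with y hy hyq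
      exact mul_le_mul_of_nonneg_left hyq hy
  rw [integral_mul_const, hg_int] at hmono
  linear_combination hgf + hmono - r * hqc

theorem sub_le_mul_exp_of_hasDerivAt_le {u u' : ℝ → ℝ} {b q T : ℝ} (hT : 0 ≤ T)
    (hu : ContinuousOn u (Icc 0 T)) (hu' : ∀ s ∈ Ioo 0 T, HasDerivAt u (u' s) s)
    (hbound : ∀ s ∈ Ioo 0 T, u' s ≤ b * (q - u s)) :
    u T - q ≤ (u 0 - q) * Real.exp (-(b * T)) := by
  set v : ℝ → ℝ := fun s => (u s - q) * Real.exp (b * s)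
  have hv' : ∀ s ∈ Ioo 0 T,
      HasDerivAt v (u' s * Real.exp (b * s) + (u s - q) * (Real.exp (b * s) * b)) s :=
    fun s hs => ((hu' s hs).sub_const q).mul (hasDerivAt_const_mul b).exp
  have hv : AntitoneOn v (Icc 0 T) := by
    refine antitoneOn_of_hasDerivWithinAt_nonpos (convex_Icc 0 T)
      (f' := fun s => u' s * Real.exp (b * s) + (u s - q) * (Real.exp (b * s) * b))
      (hu.sub continuousOn_const |>.mul (by fun_prop)) (fun s hs => ?_) (fun s hs => ?_)
    all_goals rw [interior_Icc] at hs
    · exact (hv' s hs).hasDerivWithinAt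
    · nlinarith [hbound s hs, Real.exp_pos (b * s)]
  have := hv (left_mem_Icc.2 hT) (right_mem_Icc.2 hT) hT
  simp only [v, mul_zero, Real.exp_zero, mul_one] at this
  rw [Real.exp_neg, ← div_eq_mul_inv, le_div_iff₀ (Real.exp_pos _)]
  exact this

theorem Continuous.lt_of_forall_le_Icc_imp_lt {M : ℝ → ℝ} {q : ℝ} (hM : Continuous M)
    (h0 : M 0 < q) (hstep : ∀ T > 0, (∀ s ∈ Icc 0 T, M s ≤ q) → M T < q) {t : ℝ} (ht : 0 ≤ t) :
    M t < q := by
  by_contra! hqt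
  set Z := {s ∈ Icc 0 t | q ≤ M s}
  have hZ : IsClosed Z := isClosed_Icc.inter (isClosed_le continuous_const hM)
  have hTZ : sInf Z ∈ Z := hZ.csInf_mem ⟨t, ⟨ht, le_rfl⟩, hqt⟩ ⟨0, fun s hs => hs.1.1⟩
  -- a point of `[0, inf Z]` above `q` would give an earlier point of `Z` by the IVT
  have hle : ∀ s ∈ Icc 0 (sInf Z), M s ≤ q := by
    intro s hs
    by_contra! hqs
    obtain ⟨s', hs', hMs'⟩ := intermediate_value_Ioo hs.1 hM.continuousOn ⟨h0, hqs⟩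
    have : sInf Z ≤ s' := csInf_le ⟨0, fun s hs => hs.1.1⟩
      ⟨⟨hs'.1.le, hs'.2.le.trans (hs.2.trans hTZ.1.2)⟩, hMs'.ge⟩
    linarith [hs'.2, hs.2]
  have hpos : 0 < sInf Z := hTZ.1.1.lt_of_ne fun h => by linarith [h ▸ hTZ.2]
  exact (hstep _ hpos hle).not_ge hTZ.2

namespace BoundedContinuousFunction

variable {α : Type*} [TopologicalSpace α]

theorem apply_le_norm_posPart (f : α →ᵇ ℝ) (x : α) : f x ≤ ‖f⁺‖ :=
  (le_posPart _).trans <| (le_abs_self _).trans (norm_coe_le_norm f⁺ x)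

theorem norm_posPart_lt {f : α →ᵇ ℝ} {K q : ℝ} (hf : ∀ x, f x ≤ K) (hK : K < q) (hq : 0 < q) :
    ‖f⁺‖ < q := by
  refine ((norm_le (le_max_right K 0)).2 fun x => ?_).trans_lt (max_lt hK hq)
  rw [coe_posPart, Pi.posPart_apply, Real.norm_of_nonneg (posPart_nonneg _)]
  exact max_le_max_right 0 (hf x)

end BoundedContinuousFunction

theorem stmt_15_general (d : ℕ) (b m c q : ℝ) (hm : 0 ≤ m) (hbm : m < b) (hc : 0 < c)
    (hq : q = (b - m) / c)
    (aplus aminus : (Fin d → ℝ) → ℝ)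
    (hminus_nonneg : ∀ x, 0 ≤ aminus x)
    (hplus_int : Integrable aplus) (hminus_int : Integrable aminus)
    (hb : (∫ y, aplus y) = b) (hcint : (∫ y, aminus y) = c)
    (hker : ∀ᵐ x : Fin d → ℝ, aplus x / b ≥ (1 - m / b) * (aminus x / c))
    (ρ : ℝ → BoundedContinuousFunction (Fin d → ℝ) ℝ)
    (hcont : Continuous ρ)
    (hode : ∀ t : ℝ, 0 ≤ t → ∀ x : Fin d → ℝ,
      HasDerivAt (fun s => ρ s x)
        (-m * ρ t x - ρ t x * (∫ y, aminus (x - y) * ρ t y)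
          + ∫ y, aplus (x - y) * ρ t y) t)
    (hinit' : ∃ q' : ℝ, q' < q ∧ ∀ x, ρ 0 x ≤ q') :
    ∀ t : ℝ, 0 ≤ t → ∀ x, ρ t x < q := by
  obtain ⟨q', hq'q, hq'⟩ := hinit'
  have hq0 : 0 < q := hq ▸ div_pos (sub_pos.2 hbm) hc
  have hqc : q * c = b - m := by rw [hq]; field_simp
  have hker' : ∀ᵐ z : Fin d → ℝ, q * aminus z ≤ aplus z := by
    filter_upwards [hker] with z hz
    exact hq ▸ sub_div_mul_le_of_div_ge (hm.trans_lt hbm) hz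
  have hM : Continuous fun t => ‖(ρ t)⁺‖ := (continuous_posPart.comp hcont).norm
  refine fun t ht x => (ρ t).apply_le_norm_posPart x |>.trans_lt <|
    hM.lt_of_forall_le_Icc_imp_lt ((ρ 0).norm_posPart_lt hq' hq'q hq0) (fun T hT hle => ?_) ht
  have hρq : ∀ s ∈ Icc 0 T, ∀ y, ρ s y ≤ q := fun s hs y =>
    (ρ s).apply_le_norm_posPart y |>.trans (hle s hs)
  refine (ρ T).norm_posPart_lt (K := q + (q' - q) * Real.exp (-(b * T))) (fun x => ?_) ?_ hq0
  · have hgron := sub_le_mul_exp_of_hasDerivAt_le (u := fun s => ρ s x) hT.le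
      (fun s hs => (hode s hs.1 x).continuousAt.continuousWithinAt)
      (fun s hs => hode s hs.1.le x)
      (fun s hs => logistic_rhs_le (ae_of_all _ hminus_nonneg) hplus_int hminus_int hb hcint hqc
        hker' (ρ s).continuous.aestronglyMeasurable (ae_of_all _ (ρ s).norm_coe_le_norm)
        (ae_of_all _ (hρq s (Ioo_subset_Icc_self hs))) (hρq s (Ioo_subset_Icc_self hs) x) x)
    nlinarith [hq' x, Real.exp_pos (-(b * T))]
  · nlinarith [Real.exp_pos (-(b * T))]

/-- Under condition (35) on the kernels, the region `{ρ < q}` below the carrying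
capacity `q = (b - m)/c` is invariant for the kinetic spatial-logistic flow. -/
theorem stmt_15 (d : ℕ) (b m c q : ℝ) (hm : 0 ≤ m) (hbm : m < b) (hc : 0 < c)
    (hq : q = (b - m) / c)
    (aplus aminus : (Fin d → ℝ) → ℝ)
    (hplus_nonneg : ∀ x, 0 ≤ aplus x) (hminus_nonneg : ∀ x, 0 ≤ aminus x)
    (hplus_int : Integrable aplus) (hminus_int : Integrable aminus)
    (hb : (∫ y, aplus y) = b) (hcint : (∫ y, aminus y) = c)
    (hker : ∀ᵐ x : Fin d → ℝ, aplus x / b ≥ (1 - m / b) * (aminus x / c))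
    (ρ : ℝ → BoundedContinuousFunction (Fin d → ℝ) ℝ)
    (hcont : Continuous ρ)
    (hnonneg : ∀ t : ℝ, 0 ≤ t → ∀ x, 0 ≤ ρ t x)
    (hode : ∀ t : ℝ, 0 ≤ t → ∀ x : Fin d → ℝ,
      HasDerivAt (fun s => ρ s x)
        (-m * ρ t x - ρ t x * (∫ y, aminus (x - y) * ρ t y)
          + ∫ y, aplus (x - y) * ρ t y) t)
    (hinit : ∀ x, ρ 0 x < q) (hinit' : ∃ q' : ℝ, q' < q ∧ ∀ x, ρ 0 x ≤ q') :
    ∀ t : ℝ, 0 ≤ t → ∀ x, ρ t x < q :=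
  stmt_15_general d b m c q hm hbm hc hq aplus aminus hminus_nonneg hplus_int hminus_int hb hcint
    hker ρ hcont hode hinit'
end
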